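/- arXiv:1908.10530 — 6 statements merged into one kernel-verified Lean document; each statement's English description precedes it below -/
import Mathlib

section
/- For real numbers y ≥ 1 and α > 1, the function y ↦ (y^α − y^{1−α})/(y − 1) is monotonically increasing on (1, ∞); equivalently, its derivative numerator (α−1)(y^α − y^{−α}) − α(y^{α−1} − y^{1−α}) is nonnegative for all y ≥ 1. -/
/-! With `t = log y`, the numerator equals `2 ((α - 1) sinh (α t) - α sinh ((α - 1) t))`, which is
nonnegative because `a ↦ sinh (a t) / a` is increasing on `(0, ∞)` for `t ≥ 0`: `sinh` is convex on
`[0, ∞)` and vanishes at `0`. The numerator is `(y - 1)²` times the derivative of the quotient. -/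

open Real

theorem convexOn_sinh : ConvexOn ℝ (Set.Ici 0) sinh := by
  refine MonotoneOn.convexOn_of_deriv (convex_Ici 0) continuous_sinh.continuousOn
    differentiable_sinh.differentiableOn ?_
  rw [Real.deriv_sinh, interior_Ici]
  intro x hx y hy hxy
  rw [cosh_le_cosh, abs_of_pos hx, abs_of_pos hy]
  exact hxy

theorem monotoneOn_sinh_mul_div {t : ℝ} (ht : 0 ≤ t) :
    MonotoneOn (fun a => sinh (a * t) / a) (Set.Ioi 0) := by
  intro a (ha : 0 < a) b (hb : 0 < b) hab
  have hconv := convexOn_sinh.2 (Set.mem_Ici.2 (mul_nonneg hb.le ht)) Set.self_mem_Ici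
    (div_nonneg ha.le hb.le) (sub_nonneg.2 ((div_le_one hb).2 hab)) (add_sub_cancel _ _)
  simp only [smul_eq_mul, mul_zero, add_zero, sinh_zero] at hconv
  rw [show a / b * (b * t) = a * t by field_simp] at hconv
  change sinh (a * t) / a ≤ sinh (b * t) / b
  rw [div_le_div_iff₀ ha hb]
  calc sinh (a * t) * b ≤ a / b * sinh (b * t) * b := mul_le_mul_of_nonneg_right hconv hb.le
    _ = sinh (b * t) * a := by field_simp

theorem rpow_sub_rpow_neg_eq_two_mul_sinh {y : ℝ} (hy : 0 < y) (s : ℝ) :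
    y ^ s - y ^ (-s) = 2 * sinh (s * log y) := by
  rw [sinh_eq, rpow_def_of_pos hy, rpow_def_of_pos hy]
  ring_nf

theorem hasDerivAt_rpow_sub_rpow_one_sub_div {α y : ℝ} (hy : 0 < y) (hy1 : y ≠ 1) :
    HasDerivAt (fun y : ℝ => (y ^ α - y ^ (1 - α)) / (y - 1))
      (((α - 1) * (y ^ α - y ^ (-α)) - α * (y ^ (α - 1) - y ^ (1 - α))) / (y - 1) ^ 2) y := by
  have hnum : HasDerivAt (fun y : ℝ => y ^ α - y ^ (1 - α))
      (α * y ^ (α - 1) - (1 - α) * y ^ (1 - α - 1)) y :=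
    (hasDerivAt_rpow_const (Or.inl hy.ne')).sub (hasDerivAt_rpow_const (Or.inl hy.ne'))
  refine (hnum.div ((hasDerivAt_id y).sub_const 1) (sub_ne_zero.2 hy1)).congr_deriv ?_
  have h1 : y ^ α = y ^ (α - 1) * y := by rw [← rpow_add_one hy.ne']; ring_nf
  have h2 : y ^ (1 - α) = y ^ (-α) * y := by rw [← rpow_add_one hy.ne']; ring_nf
  rw [show 1 - α - 1 = -α by ring, h1, h2, id]
  ring

theorem deriv_numerator_nonneg_and_monotone (α : ℝ) (hα : 1 < α) :
    (∀ y : ℝ, 1 ≤ y →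
      0 ≤ (α - 1) * (y ^ α - y ^ (-α)) - α * (y ^ (α - 1) - y ^ (1 - α))) ∧
    MonotoneOn (fun y : ℝ => (y ^ α - y ^ (1 - α)) / (y - 1)) (Set.Ioi (1 : ℝ)) := by
  have hα0 : 0 < α - 1 := sub_pos.2 hα
  have hN : ∀ y : ℝ, 1 ≤ y →
      0 ≤ (α - 1) * (y ^ α - y ^ (-α)) - α * (y ^ (α - 1) - y ^ (1 - α)) := by
    intro y hy
    have hy0 : 0 < y := one_pos.trans_le hy
    have hsinh := monotoneOn_sinh_mul_div (log_nonneg hy) hα0 (hα0.trans (sub_lt_self α one_pos))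
      (sub_le_self α zero_le_one)
    rw [div_le_div_iff₀ hα0 (zero_lt_one.trans hα)] at hsinh
    rw [← neg_sub α 1, rpow_sub_rpow_neg_eq_two_mul_sinh hy0,
      rpow_sub_rpow_neg_eq_two_mul_sinh hy0]
    linarith
  have hderiv (y : ℝ) (hy : y ∈ Set.Ioi 1) := hasDerivAt_rpow_sub_rpow_one_sub_div (α := α)
    (one_pos.trans hy) (ne_of_gt hy)
  refine ⟨hN, monotoneOn_of_deriv_nonneg (convex_Ioi 1)
    (fun y hy => (hderiv y hy).continuousAt.continuousWithinAt) ?_ ?_⟩ <;> rw [interior_Ioi]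
  · exact fun y hy => (hderiv y hy).differentiableAt.differentiableWithinAt
  · intro y hy
    rw [(hderiv y hy).deriv]
    exact div_nonneg (hN y (le_of_lt hy)) (sq_nonneg _)
end

section
/- Let α > 1, q ∈ [0,1], and u, v > 0. Then v·((1−q) + q·u/v)^α + u·((1−q) + q·v/u)^α ≥ v·((1−q) + q·u/v)^{1−α} + u·((1−q) + q·v/u)^{1−α}. -/
/-!
Put `f x = x ^ α - x ^ (1 - α)` and `s = q (u - v) ≥ 0` (for `v ≤ u`). The claim says
`v f((v + s)/v) + u f((u - s)/u) ≥ 0`. Since `a f(b/a) = a^(1-α) b^α - a^α b^(1-α)` is antisymmetric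
in `(a, b)`, the second term is `-n f((n + s)/n)` with `n = u - s ≥ v`, so it suffices that the
perspective `t ↦ t f((t + s)/t)` is antitone. That holds for every `f` convex on `[1, ∞)` with
`f 1 = 0`, and `f'' = α(α-1)(x^(α-2) - x^(-α-1)) ≥ 0` there.
-/

open Real Set

lemma convexOn_rpow_sub_rpow_one_sub {α : ℝ} (hα : 1 ≤ α) :
    ConvexOn ℝ (Ici 1) (fun x : ℝ => x ^ α - x ^ (1 - α)) := by
  have hpos : ∀ x ∈ interior (Ici (1 : ℝ)), 0 < x := fun x hx => by
    rw [interior_Ici] at hx; exact zero_lt_one.trans hx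
  refine convexOn_of_hasDerivWithinAt2_nonneg (convex_Ici 1)
    (f' := fun x => α * x ^ (α - 1) - (1 - α) * x ^ (1 - α - 1))
    (f'' := fun x => α * ((α - 1) * x ^ (α - 1 - 1)) - (1 - α) * ((1 - α - 1) * x ^ (1 - α - 1 - 1)))
    ?_ (fun x hx => ?_) (fun x hx => ?_) (fun x hx => ?_)
  · have hne (p : ℝ) : ∀ x ∈ Ici (1 : ℝ), x ≠ 0 ∨ 0 ≤ p := fun x hx =>
      Or.inl (zero_lt_one.trans_le hx).ne'
    exact (continuousOn_id.rpow_const (hne α)).sub (continuousOn_id.rpow_const (hne (1 - α)))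
  · have hx0 := (hpos x hx).ne'
    exact ((hasDerivAt_rpow_const (Or.inl hx0)).sub
      (hasDerivAt_rpow_const (Or.inl hx0))).hasDerivWithinAt
  · have hx0 := (hpos x hx).ne'
    exact (((hasDerivAt_rpow_const (Or.inl hx0)).const_mul α).sub
      ((hasDerivAt_rpow_const (Or.inl hx0)).const_mul (1 - α))).hasDerivWithinAt
  · rw [interior_Ici, mem_Ioi] at hx
    have hpow : x ^ (1 - α - 1 - 1) ≤ x ^ (α - 1 - 1) :=
      rpow_le_rpow_of_exponent_le hx.le (by linarith)
    have hcoef : 0 ≤ α * (α - 1) := by nlinarith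
    linarith [mul_le_mul_of_nonneg_left hpow hcoef]

lemma ConvexOn.antitoneOn_mul_apply_add_div {f : ℝ → ℝ} (hf : ConvexOn ℝ (Ici 1) f)
    (hf1 : f 1 = 0) {s : ℝ} (hs : 0 ≤ s) :
    AntitoneOn (fun t => t * f ((t + s) / t)) (Ioi 0) := by
  intro t ht t' ht' htt'
  simp only [mem_Ioi] at ht ht'
  show t' * f ((t' + s) / t') ≤ t * f ((t + s) / t)
  have hx : (t + s) / t ∈ Ici (1 : ℝ) := by
    rw [mem_Ici, le_div_iff₀ ht]; linarith
  have hconv := hf.2 hx (mem_Ici.2 le_rfl) (div_nonneg ht.le ht'.le)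
    (sub_nonneg.2 ((div_le_one ht').2 htt')) (add_sub_cancel _ _)
  have hcomb : (t / t') • ((t + s) / t) + (1 - t / t') • (1 : ℝ) = (t' + s) / t' := by
    simp only [smul_eq_mul]; field_simp; ring
  rw [hcomb, hf1, smul_zero, add_zero, smul_eq_mul] at hconv
  calc t' * f ((t' + s) / t') ≤ t' * (t / t' * f ((t + s) / t)) :=
        mul_le_mul_of_nonneg_left hconv ht'.le
    _ = t * f ((t + s) / t) := by field_simp

lemma mul_rpow_div_sub_rpow_div {α a b : ℝ} (ha : 0 < a) (hb : 0 ≤ b) :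
    a * ((b / a) ^ α - (b / a) ^ (1 - α)) = a ^ (1 - α) * b ^ α - a ^ α * b ^ (1 - α) := by
  rw [div_rpow hb ha.le, div_rpow hb ha.le, rpow_sub ha, rpow_one]
  field_simp

lemma mixture_rpow_gap_nonneg_of_le {α q u v : ℝ} (hα : 1 ≤ α) (hq0 : 0 ≤ q) (hq1 : q ≤ 1)
    (hv : 0 < v) (hvu : v ≤ u) :
    0 ≤ v * (((1 - q) + q * (u / v)) ^ α - ((1 - q) + q * (u / v)) ^ (1 - α)) +
      u * (((1 - q) + q * (v / u)) ^ α - ((1 - q) + q * (v / u)) ^ (1 - α)) := by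
  have hu : 0 < u := hv.trans_le hvu
  set s := q * (u - v)
  have hs : 0 ≤ s := mul_nonneg hq0 (sub_nonneg.2 hvu)
  have hvn : v ≤ u - s := by nlinarith [mul_nonneg (sub_nonneg.2 hq1) (sub_nonneg.2 hvu)]
  have hn : 0 < u - s := hv.trans_le hvn
  have hx : (1 - q) + q * (u / v) = (v + s) / v := by field_simp; ring
  have hy : (1 - q) + q * (v / u) = (u - s) / u := by field_simp; ring
  have hanti := (convexOn_rpow_sub_rpow_one_sub hα).antitoneOn_mul_apply_add_div (by simp) hs
    hv hn hvn
  simp only [sub_add_cancel] at hanti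
  rw [hx, hy, mul_rpow_div_sub_rpow_div hv (by linarith), mul_rpow_div_sub_rpow_div hu hn.le]
  rw [mul_rpow_div_sub_rpow_div hv (by linarith), mul_rpow_div_sub_rpow_div hn hu.le] at hanti
  linarith

theorem mixture_pointwise_dominance (α q u v : ℝ) (hα : 1 < α) (hq0 : 0 ≤ q) (hq1 : q ≤ 1)
    (hu : 0 < u) (hv : 0 < v) :
    v * ((1 - q) + q * (u / v)) ^ (1 - α) + u * ((1 - q) + q * (v / u)) ^ (1 - α) ≤
    v * ((1 - q) + q * (u / v)) ^ α + u * ((1 - q) + q * (v / u)) ^ α := by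
  rcases le_total v u with hvu | huv
  · linarith [mixture_rpow_gap_nonneg_of_le hα.le hq0 hq1 hv hvu]
  · linarith [mixture_rpow_gap_nonneg_of_le hα.le hq0 hq1 hu huv]
end

section
/- For real α ≥ 1 and real w with −1 < w ≤ 1/(α−1), it holds that (1+w)^α ≤ 1 + αw + α(α−1)w². -/
open Real Set

/-!
Write `β = α - 1` and `g w = 1 + α w + α β w² - (1 + w) ^ α`, so that `g 0 = 0` and
`g' x = α (1 + 2 β x - (1 + x) ^ β)`. For `0 ≤ β x ≤ 1` the estimate
`(1 + x) ^ β ≤ exp (β x) ≤ 1 + 2 β x` gives `g' ≥ 0`, which settles `w ≥ 0`. For `w ≤ 0` and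
`α ≥ 2`, convex Bernoulli `(1 + x) ^ β ≥ 1 + β x` gives `g' ≤ 0` on `(-1, 0]`. For `α ≤ 2` concave
Bernoulli `(1 + w) ^ β ≤ 1 + β w`, multiplied by `1 + w`, already gives the bound with the smaller
coefficient `β ≤ α β` of `w²`.
-/

lemma one_add_rpow_le_one_add_two_mul {β x : ℝ} (hβ : 0 ≤ β) (hx : 0 ≤ x) (hβx : β * x ≤ 1) :
    (1 + x) ^ β ≤ 1 + 2 * (β * x) := by
  have hβx₀ : |β * x| = β * x := abs_of_nonneg (mul_nonneg hβ hx)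
  have hexp : exp (β * x) - 1 ≤ 2 * (β * x) := by
    have h := abs_exp_sub_one_le (x := β * x) (by rwa [hβx₀])
    rw [hβx₀] at h
    exact (abs_le.1 h).2
  calc (1 + x) ^ β ≤ exp x ^ β := by
        gcongr
        linarith [add_one_le_exp x]
    _ = exp (β * x) := by rw [← exp_mul, mul_comm]
    _ ≤ 1 + 2 * (β * x) := by linarith

lemma one_add_rpow_le_of_le_two {α w : ℝ} (hα : 1 ≤ α) (hα2 : α ≤ 2) (hw : -1 ≤ w) :
    (1 + w) ^ α ≤ 1 + α * w + (α - 1) * w ^ 2 := by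
  have hbern : (1 + w) ^ (α - 1) ≤ 1 + (α - 1) * w :=
    rpow_one_add_le_one_add_mul_self hw (by linarith) (by linarith)
  calc (1 + w) ^ α = (1 + w) * (1 + w) ^ (α - 1) := by
        rw [← rpow_one_add' (by linarith) (by linarith)]
        ring_nf
    _ ≤ (1 + w) * (1 + (α - 1) * w) := mul_le_mul_of_nonneg_left hbern (by linarith)
    _ = 1 + α * w + (α - 1) * w ^ 2 := by ring

section QuadraticMinusRpow

variable {α : ℝ}

lemma hasDerivAt_quadratic_sub_rpow {x : ℝ} (hx : -1 < x) :
    HasDerivAt (fun y : ℝ => 1 + α * y + α * (α - 1) * y ^ 2 - (1 + y) ^ α)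
      (α * (1 + 2 * (α - 1) * x - (1 + x) ^ (α - 1))) x := by
  have hpow : HasDerivAt (fun y : ℝ => (1 + y) ^ α) (α * (1 + x) ^ (α - 1)) x := by
    simpa using ((hasDerivAt_id' x).const_add 1).rpow_const (p := α) (Or.inl (by linarith))
  have hquad := (((hasDerivAt_id' x).const_mul α).const_add 1).add
    (((hasDerivAt_id' x).pow 2).const_mul (α * (α - 1)))
  refine (hquad.sub hpow).congr_deriv ?_
  norm_num
  ring

lemma quadratic_sub_rpow_monotoneOn (hα : 0 ≤ α) {a b : ℝ} (ha : -1 < a)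
    (hderiv : ∀ x ∈ Ioo a b, 0 ≤ 1 + 2 * (α - 1) * x - (1 + x) ^ (α - 1)) :
    MonotoneOn (fun y : ℝ => 1 + α * y + α * (α - 1) * y ^ 2 - (1 + y) ^ α) (Icc a b) := by
  refine monotoneOn_of_hasDerivWithinAt_nonneg (convex_Icc a b)
    (f' := fun x => α * (1 + 2 * (α - 1) * x - (1 + x) ^ (α - 1)))
    (fun x hx => (hasDerivAt_quadratic_sub_rpow (by linarith [hx.1])).continuousAt
      |>.continuousWithinAt) (fun x hx => ?_) (fun x hx => ?_) <;> rw [interior_Icc] at hx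
  · exact (hasDerivAt_quadratic_sub_rpow (by linarith [hx.1])).hasDerivWithinAt
  · exact mul_nonneg hα (hderiv x hx)

lemma quadratic_sub_rpow_antitoneOn (hα : 0 ≤ α) {a b : ℝ} (ha : -1 < a)
    (hderiv : ∀ x ∈ Ioo a b, 1 + 2 * (α - 1) * x - (1 + x) ^ (α - 1) ≤ 0) :
    AntitoneOn (fun y : ℝ => 1 + α * y + α * (α - 1) * y ^ 2 - (1 + y) ^ α) (Icc a b) := by
  refine antitoneOn_of_hasDerivWithinAt_nonpos (convex_Icc a b)
    (f' := fun x => α * (1 + 2 * (α - 1) * x - (1 + x) ^ (α - 1)))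
    (fun x hx => (hasDerivAt_quadratic_sub_rpow (by linarith [hx.1])).continuousAt
      |>.continuousWithinAt) (fun x hx => ?_) (fun x hx => ?_) <;> rw [interior_Icc] at hx
  · exact (hasDerivAt_quadratic_sub_rpow (by linarith [hx.1])).hasDerivWithinAt
  · exact mul_nonpos_of_nonneg_of_nonpos hα (hderiv x hx)

lemma one_add_rpow_le_of_nonneg (hα : 1 ≤ α) {w : ℝ} (hw : 0 ≤ w) (hαw : (α - 1) * w ≤ 1) :
    (1 + w) ^ α ≤ 1 + α * w + α * (α - 1) * w ^ 2 := by
  have hmono := quadratic_sub_rpow_monotoneOn (α := α) (a := 0) (b := w) (by linarith)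
    (by norm_num) fun x hx => by
      have := one_add_rpow_le_one_add_two_mul (β := α - 1) (by linarith) hx.1.le
        (by nlinarith [hx.2])
      linarith
  simpa using hmono (left_mem_Icc.2 hw) (right_mem_Icc.2 hw) hw

lemma one_add_rpow_le_of_nonpos (hα : 2 ≤ α) {w : ℝ} (hw : -1 < w) (hw0 : w ≤ 0) :
    (1 + w) ^ α ≤ 1 + α * w + α * (α - 1) * w ^ 2 := by
  have hanti := quadratic_sub_rpow_antitoneOn (α := α) (b := 0) (by linarith) hw fun x hx => by
    have := one_add_mul_self_le_rpow_one_add (s := x) (p := α - 1) (by linarith [hx.1])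
      (by linarith)
    nlinarith [hx.2]
  simpa using hanti (left_mem_Icc.2 hw0) (right_mem_Icc.2 hw0) hw0

end QuadraticMinusRpow

theorem one_add_pow_le (α w : ℝ) (hα : 1 ≤ α) (hw : -1 < w)
    (hw2 : 1 < α → w ≤ 1 / (α - 1)) :
    (1 + w) ^ α ≤ 1 + α * w + α * (α - 1) * w ^ 2 := by
  rcases le_total 0 w with hw0 | hw0
  · refine one_add_rpow_le_of_nonneg hα hw0 ?_
    rcases hα.eq_or_lt with rfl | hα1
    · simp
    · exact (le_div_iff₀' (by linarith)).1 (hw2 hα1)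
  rcases le_total α 2 with hα2 | hα2
  · have := one_add_rpow_le_of_le_two hα hα2 hw.le
    nlinarith [mul_nonneg (sub_nonneg.2 hα) (sq_nonneg w)]
  · exact one_add_rpow_le_of_nonpos hα2 hw hw0
end

section
/- Let α ≥ 1, q ∈ [0,1], r₀ = 1 + 1/(q(α−1)) (with α > 1, q > 0), and let x, y > 0 satisfy 1/r₀ ≤ x/y ≤ r₀. Then x·(1 + q(y−x)/x)^α + y·(1 + q(x−y)/y)^α ≤ (x + y) + q²α(α−1)·(x²/y + y²/x − (x+y)). -/
/-!
Both terms are controlled by the pointwise bound `(1 + w)^α ≤ 1 + α w + α(α-1) w²`, valid for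
`-1 ≤ w` and `(α - 1) w ≤ 1`, applied to `w = q(y/x - 1)` and `w = q(x/y - 1)`; the window
`1/r₀ ≤ x/y ≤ r₀` is exactly `(α - 1) w ≤ 1` for both. Multiplying by `x` and `y` and adding, the
linear terms cancel and the quadratic ones give `q² α(α-1)(x²/y + y²/x - (x + y))`.

For `α ≤ 2` the pointwise bound follows from Bernoulli's inequality for the exponent `α - 1 ≤ 1`.
For `α ≥ 2` the difference of the two sides vanishes at `0` and its derivative
`α (1 + 2(α-1)t - (1+t)^(α-1))` has the sign of `t`: for `t ≤ 0` by Bernoulli, for `t ≥ 0` from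
`(1+t)^(α-1) ≤ exp((α-1)t) ≤ 1 + 2(α-1)t`, which is where `(α - 1) t ≤ 1` enters.
-/

open Real Set

lemma apply_zero_le_of_hasDerivAt_of_sign {g g' : ℝ → ℝ} (hg : ∀ t, HasDerivAt g (g' t) t)
    {w : ℝ} (hpos : ∀ t ∈ Ioo 0 w, 0 ≤ g' t) (hneg : ∀ t ∈ Ioo w 0, g' t ≤ 0) :
    g 0 ≤ g w := by
  have hcont : Continuous g := continuous_iff_continuousAt.2 fun t ↦ (hg t).continuousAt
  have hderiv (D : Set ℝ) (t : ℝ) : HasDerivWithinAt g (g' t) (interior D) t :=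
    (hg t).hasDerivWithinAt
  rcases le_total 0 w with hw | hw
  · refine monotoneOn_of_hasDerivWithinAt_nonneg (convex_Icc 0 w) hcont.continuousOn
      (fun t _ ↦ hderiv _ t) (fun t ht ↦ hpos t ?_) (left_mem_Icc.2 hw) (right_mem_Icc.2 hw) hw
    rwa [interior_Icc] at ht
  · refine antitoneOn_of_hasDerivWithinAt_nonpos (convex_Icc w 0) hcont.continuousOn
      (fun t _ ↦ hderiv _ t) (fun t ht ↦ hneg t ?_) (left_mem_Icc.2 hw) (right_mem_Icc.2 hw) hw
    rwa [interior_Icc] at ht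

lemma one_add_rpow_le_one_add_two_mul_s8 {p s : ℝ} (hp : 0 ≤ p) (hs : 0 ≤ s) (hps : p * s ≤ 1) :
    (1 + s) ^ p ≤ 1 + 2 * (p * s) := by
  have hexp : |exp (p * s) - 1| ≤ 2 * |p * s| :=
    abs_exp_sub_one_le (by rwa [abs_of_nonneg (by positivity)])
  calc (1 + s) ^ p ≤ exp s ^ p := rpow_le_rpow (by linarith) (by linarith [add_one_le_exp s]) hp
    _ = exp (p * s) := by rw [← exp_mul, mul_comm]
    _ ≤ 1 + 2 * (p * s) := by
      rw [abs_of_nonneg (by positivity : 0 ≤ p * s)] at hexp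
      linarith [le_abs_self (exp (p * s) - 1)]

lemma rpow_one_add_le_quadratic_of_le_two {α w : ℝ} (hα1 : 1 ≤ α) (hα2 : α ≤ 2) (hw : -1 ≤ w) :
    (1 + w) ^ α ≤ 1 + α * w + α * (α - 1) * w ^ 2 := by
  have hbase : 0 ≤ 1 + w := by linarith
  have hbernoulli : (1 + w) ^ (α - 1) ≤ 1 + (α - 1) * w :=
    rpow_one_add_le_one_add_mul_self hw (by linarith) (by linarith)
  calc (1 + w) ^ α = (1 + w) ^ (1 : ℝ) * (1 + w) ^ (α - 1) := by
        rw [← rpow_add' hbase (by linarith)]; ring_nf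
    _ ≤ (1 + w) * (1 + (α - 1) * w) := by
        rw [rpow_one]; exact mul_le_mul_of_nonneg_left hbernoulli hbase
    _ ≤ 1 + α * w + α * (α - 1) * w ^ 2 := by nlinarith [sq_nonneg ((α - 1) * w)]

lemma rpow_one_add_le_quadratic_of_two_le {α w : ℝ} (hα : 2 ≤ α) (hw : -1 ≤ w)
    (hαw : (α - 1) * w ≤ 1) :
    (1 + w) ^ α ≤ 1 + α * w + α * (α - 1) * w ^ 2 := by
  let g : ℝ → ℝ := fun t ↦ 1 + α * t + α * (α - 1) * t ^ 2 - (1 + t) ^ α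
  let g' : ℝ → ℝ := fun t ↦ α * (1 + 2 * (α - 1) * t - (1 + t) ^ (α - 1))
  have hg (t : ℝ) : HasDerivAt g (g' t) t := by
    have hpow := ((hasDerivAt_id t).const_add 1).rpow_const (p := α) (Or.inr (by linarith))
    have hpoly := (((hasDerivAt_id t).const_mul α).const_add 1).add
      ((hasDerivAt_pow 2 t).const_mul (α * (α - 1)))
    exact (hpoly.sub hpow).congr_deriv (by simp only [g', id]; ring)
  have hpos (t : ℝ) (ht : t ∈ Ioo 0 w) : 0 ≤ g' t := by
    have : (1 + t) ^ (α - 1) ≤ 1 + 2 * ((α - 1) * t) :=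
      one_add_rpow_le_one_add_two_mul_s8 (by linarith) ht.1.le (by nlinarith [ht.2])
    exact mul_nonneg (by linarith) (by linarith)
  have hneg (t : ℝ) (ht : t ∈ Ioo w 0) : g' t ≤ 0 := by
    have : 1 + (α - 1) * t ≤ (1 + t) ^ (α - 1) :=
      one_add_mul_self_le_rpow_one_add (by linarith [ht.1]) (by linarith)
    exact mul_nonpos_of_nonneg_of_nonpos (by linarith) (by nlinarith [ht.2])
  simpa [g] using apply_zero_le_of_hasDerivAt_of_sign hg hpos hneg

lemma rpow_one_add_le_quadratic {α w : ℝ} (hα : 1 ≤ α) (hw : -1 ≤ w) (hαw : (α - 1) * w ≤ 1) :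
    (1 + w) ^ α ≤ 1 + α * w + α * (α - 1) * w ^ 2 := by
  rcases le_total α 2 with h2 | h2
  · exact rpow_one_add_le_quadratic_of_le_two hα h2 hw
  · exact rpow_one_add_le_quadratic_of_two_le h2 hw hαw

lemma neg_one_le_and_mul_le_one_of_div_le {α q x y : ℝ} (hα : 1 < α) (hq0 : 0 < q)
    (hq1 : q ≤ 1) (hx : 0 < x) (hy : 0 < y) (h : y / x ≤ 1 + 1 / (q * (α - 1))) :
    -1 ≤ q * ((y - x) / x) ∧ (α - 1) * (q * ((y - x) / x)) ≤ 1 := by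
  have hqα : 0 < q * (α - 1) := mul_pos hq0 (by linarith)
  have hw : q * ((y - x) / x) = q * (y / x - 1) := by rw [sub_div, div_self hx.ne']
  rw [hw]
  constructor
  · nlinarith [div_pos hy hx]
  · have hle : y / x - 1 ≤ 1 / (q * (α - 1)) := by linarith
    have := mul_le_mul_of_nonneg_left hle hqα.le
    rw [mul_one_div_cancel hqα.ne'] at this
    linarith

theorem lemma_symmetric (α q x y : ℝ) (hα : 1 < α) (hq0 : 0 < q) (hq1 : q ≤ 1)
    (hx : 0 < x) (hy : 0 < y)
    (hlo : 1 / (1 + 1 / (q * (α - 1))) ≤ x / y)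
    (hhi : x / y ≤ 1 + 1 / (q * (α - 1))) :
    x * (1 + q * ((y - x) / x)) ^ α + y * (1 + q * ((x - y) / y)) ^ α ≤
      (x + y) + q ^ 2 * α * (α - 1) * (x ^ 2 / y + y ^ 2 / x - (x + y)) := by
  have hyx : y / x ≤ 1 + 1 / (q * (α - 1)) := by
    simpa only [one_div_div, one_div_one_div, div_one] using
      one_div_le_one_div_of_le (by positivity) hlo
  obtain ⟨hw₁, hαw₁⟩ := neg_one_le_and_mul_le_one_of_div_le hα hq0 hq1 hx hy hyx
  obtain ⟨hw₂, hαw₂⟩ := neg_one_le_and_mul_le_one_of_div_le hα hq0 hq1 hy hx hhi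
  calc x * (1 + q * ((y - x) / x)) ^ α + y * (1 + q * ((x - y) / y)) ^ α
      ≤ x * (1 + α * (q * ((y - x) / x)) + α * (α - 1) * (q * ((y - x) / x)) ^ 2) +
        y * (1 + α * (q * ((x - y) / y)) + α * (α - 1) * (q * ((x - y) / y)) ^ 2) := by
        gcongr
        · exact rpow_one_add_le_quadratic hα.le hw₁ hαw₁
        · exact rpow_one_add_le_quadratic hα.le hw₂ hαw₂
    _ = (x + y) + q ^ 2 * α * (α - 1) * (x ^ 2 / y + y ^ 2 / x - (x + y)) := by
        field_simp
        ring
end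

section
/- Let μ0, μ1 be the densities of N(0,σ²) and N(1,σ²), q ∈ [0,1], and let integer α ≥ 1. Then E_{z∼μ0}[((1−q) + q μ1(z)/μ0(z))^α] = Σ_{k=0}^{α} C(α,k)(1−q)^{α−k} q^k exp((k² − k)/(2σ²)). -/
open Real MeasureTheory

noncomputable def gaussPdf (σ m x : ℝ) : ℝ :=
  (1 / (σ * Real.sqrt (2 * Real.pi))) * Real.exp (-(x - m) ^ 2 / (2 * σ ^ 2))

/-!
The likelihood ratio `μₘ(x)/μ₀(x)` of `N(m, σ²)` against `N(0, σ²)` is `exp((2mx - m²)/(2σ²))`, so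
completing the square gives `μ₀ (μₘ/μ₀)ᵏ = exp((k² - k)m²/(2σ²)) μₖₘ`, whose integral is the
exponential factor. Expanding `((1 - q) + q μ₁/μ₀)^α` binomially and integrating term by term
yields the closed form.
-/

open ProbabilityTheory Finset

lemma gaussPdf_eq_gaussianPDFReal {σ : ℝ} (hσ : 0 < σ) (m : ℝ) :
    gaussPdf σ m = gaussianPDFReal m (σ ^ 2).toNNReal := by
  ext x
  rw [gaussPdf, gaussianPDFReal_def, Real.coe_toNNReal _ (sq_nonneg σ), one_div, mul_comm (2 * π),
    sqrt_mul (sq_nonneg σ), sqrt_sq hσ.le]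

lemma integrable_gaussPdf {σ : ℝ} (hσ : 0 < σ) (m : ℝ) : Integrable (gaussPdf σ m) := by
  rw [gaussPdf_eq_gaussianPDFReal hσ]
  exact integrable_gaussianPDFReal _ _

lemma integral_gaussPdf {σ : ℝ} (hσ : 0 < σ) (m : ℝ) : ∫ x, gaussPdf σ m x = 1 := by
  rw [gaussPdf_eq_gaussianPDFReal hσ]
  exact integral_gaussianPDFReal_eq_one _ (Real.toNNReal_pos.mpr (by positivity)).ne'

lemma gaussPdf_div_gaussPdf_zero {σ : ℝ} (hσ : σ ≠ 0) (m x : ℝ) :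
    gaussPdf σ m x / gaussPdf σ 0 x = exp ((2 * m * x - m ^ 2) / (2 * σ ^ 2)) := by
  have hc : 1 / (σ * sqrt (2 * π)) ≠ 0 := by positivity
  rw [gaussPdf, gaussPdf, mul_div_mul_left _ _ hc, ← exp_sub]
  congr 1
  ring

lemma gaussPdf_zero_mul_div_pow {σ : ℝ} (hσ : σ ≠ 0) (m x : ℝ) (k : ℕ) :
    gaussPdf σ 0 x * (gaussPdf σ m x / gaussPdf σ 0 x) ^ k =
      exp (((k : ℝ) ^ 2 - k) * m ^ 2 / (2 * σ ^ 2)) * gaussPdf σ (k * m) x := by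
  rw [gaussPdf_div_gaussPdf_zero hσ, ← exp_nat_mul, gaussPdf, gaussPdf, mul_left_comm, mul_assoc,
    ← exp_add, ← exp_add]
  congr 2
  ring

lemma integrable_gaussPdf_zero_mul_div_pow {σ : ℝ} (hσ : 0 < σ) (m : ℝ) (k : ℕ) :
    Integrable fun x ↦ gaussPdf σ 0 x * (gaussPdf σ m x / gaussPdf σ 0 x) ^ k := by
  simp_rw [gaussPdf_zero_mul_div_pow hσ.ne']
  exact (integrable_gaussPdf hσ _).const_mul _

lemma integral_gaussPdf_zero_mul_div_pow {σ : ℝ} (hσ : 0 < σ) (m : ℝ) (k : ℕ) :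
    ∫ x, gaussPdf σ 0 x * (gaussPdf σ m x / gaussPdf σ 0 x) ^ k =
      exp (((k : ℝ) ^ 2 - k) * m ^ 2 / (2 * σ ^ 2)) := by
  simp_rw [gaussPdf_zero_mul_div_pow hσ.ne', integral_const_mul, integral_gaussPdf hσ, mul_one]

theorem A_alpha_integer_closed_form_general (σ q : ℝ) (hσ : 0 < σ)
    (α : ℕ) :
    ∫ z, gaussPdf σ 0 z * ((1 - q) + q * (gaussPdf σ 1 z / gaussPdf σ 0 z)) ^ α =
      ∑ k ∈ Finset.range (α + 1),
        (α.choose k : ℝ) * (1 - q) ^ (α - k) * q ^ k *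
          Real.exp (((k : ℝ) ^ 2 - k) / (2 * σ ^ 2)) := by
  have hexpand : ∀ z, gaussPdf σ 0 z * ((1 - q) + q * (gaussPdf σ 1 z / gaussPdf σ 0 z)) ^ α =
      ∑ k ∈ range (α + 1), (α.choose k : ℝ) * (1 - q) ^ (α - k) * q ^ k *
        (gaussPdf σ 0 z * (gaussPdf σ 1 z / gaussPdf σ 0 z) ^ k) := by
    intro z
    rw [add_comm, add_pow, mul_sum]
    refine sum_congr rfl fun k _ ↦ ?_
    ring
  simp_rw [hexpand]
  rw [integral_finsetSum _ fun k _ ↦ (integrable_gaussPdf_zero_mul_div_pow hσ 1 k).const_mul _]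
  simp_rw [integral_const_mul, integral_gaussPdf_zero_mul_div_pow hσ, one_pow, mul_one]

theorem A_alpha_integer_closed_form (σ q : ℝ) (hσ : 0 < σ) (hq0 : 0 ≤ q) (hq1 : q ≤ 1)
    (α : ℕ) (hα : 1 ≤ α) :
    ∫ z, gaussPdf σ 0 z * ((1 - q) + q * (gaussPdf σ 1 z / gaussPdf σ 0 z)) ^ α =
      ∑ k ∈ Finset.range (α + 1),
        (α.choose k : ℝ) * (1 - q) ^ (α - k) * q ^ k *
          Real.exp (((k : ℝ) ^ 2 - k) / (2 * σ ^ 2)) :=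
  A_alpha_integer_closed_form_general σ q hσ α
end

section
/- Let σ > 0, q ∈ (0,1), α > 1, z₀ = 1/2 + σ² ln(1 + 1/(q(α−1))), and suppose z₀ ≥ α. Then ∫_{z₀}^∞ μ0(z)·(qα·μ1(z)/μ0(z))^α dz ≤ (qα)^α · exp((α² − α − (z₀ − α)²)/(2σ²)), where μ0, μ1 are the densities of N(0,σ²), N(1,σ²). -/
open Real MeasureTheory

/-!
Completing the square, `μ₀ (c μ₁/μ₀)^α = c^α e^{(α² - α)/(2σ²)} · N(α, σ²)`, so the integral is a
multiple of a Gaussian tail. For `α ≤ z ≤ z'` one has `(z' - α)² ≥ (z - α)² + (z' - z)²`, which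
bounds the tail of `N(α, σ²)` beyond `z` by `e^{-(z - α)²/(2σ²)}` times the mass of `N(z, σ²)`.
-/

namespace gaussPdf

variable {σ : ℝ}

lemma eq_gaussianPDFReal (hσ : 0 ≤ σ) (m : ℝ) :
    gaussPdf σ m = ProbabilityTheory.gaussianPDFReal m ⟨σ ^ 2, sq_nonneg σ⟩ := by
  ext x
  have hsqrt : √(2 * π * σ ^ 2) = σ * √(2 * π) := by
    rw [sqrt_mul (by positivity), sqrt_sq hσ, mul_comm]
  simp only [gaussPdf, ProbabilityTheory.gaussianPDFReal, one_div, ← hsqrt]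
  rfl

lemma pos (hσ : 0 < σ) (m x : ℝ) : 0 < gaussPdf σ m x := by
  unfold gaussPdf
  positivity

lemma integrable (hσ : 0 < σ) (m : ℝ) : Integrable (gaussPdf σ m) := by
  rw [eq_gaussianPDFReal hσ.le]
  exact ProbabilityTheory.integrable_gaussianPDFReal m _

lemma setIntegral_le_one (hσ : 0 < σ) (m : ℝ) (s : Set ℝ) : ∫ x in s, gaussPdf σ m x ≤ 1 := by
  have hv : (⟨σ ^ 2, sq_nonneg σ⟩ : NNReal) ≠ 0 := NNReal.coe_ne_zero.mp (pow_ne_zero 2 hσ.ne')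
  calc ∫ x in s, gaussPdf σ m x ≤ ∫ x, gaussPdf σ m x :=
        setIntegral_le_integral (integrable hσ m) (.of_forall fun x ↦ (pos hσ m x).le)
    _ = 1 := by
        rw [eq_gaussianPDFReal hσ.le]
        exact ProbabilityTheory.integral_gaussianPDFReal_eq_one m hv

lemma div_gaussPdf_zero (hσ : σ ≠ 0) (z : ℝ) :
    gaussPdf σ 1 z / gaussPdf σ 0 z = exp ((2 * z - 1) / (2 * σ ^ 2)) := by
  unfold gaussPdf
  rw [mul_div_mul_left _ _ (by positivity), ← exp_sub]
  congr 1
  field_simp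
  ring

lemma mul_rpow_likelihoodRatio {c : ℝ} (hσ : σ ≠ 0) (hc : 0 ≤ c) (α z : ℝ) :
    gaussPdf σ 0 z * (c * (gaussPdf σ 1 z / gaussPdf σ 0 z)) ^ α =
      c ^ α * exp ((α ^ 2 - α) / (2 * σ ^ 2)) * gaussPdf σ α z := by
  rw [div_gaussPdf_zero hσ, mul_rpow hc (exp_pos _).le, ← exp_mul]
  unfold gaussPdf
  have hsquare : -(z - 0) ^ 2 / (2 * σ ^ 2) + (2 * z - 1) / (2 * σ ^ 2) * α =
      (α ^ 2 - α) / (2 * σ ^ 2) + -(z - α) ^ 2 / (2 * σ ^ 2) := by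
    field_simp
    ring
  calc _ = c ^ α * (1 / (σ * √(2 * π))) *
        exp (-(z - 0) ^ 2 / (2 * σ ^ 2) + (2 * z - 1) / (2 * σ ^ 2) * α) := by
        rw [exp_add]; ring
    _ = _ := by rw [hsquare, exp_add]; ring

lemma le_exp_mul_gaussPdf {m a z : ℝ} (hσ : 0 ≤ σ) (hma : m ≤ a) (haz : a ≤ z) :
    gaussPdf σ m z ≤ exp (-(a - m) ^ 2 / (2 * σ ^ 2)) * gaussPdf σ a z := by
  unfold gaussPdf
  rw [mul_left_comm, ← exp_add, ← add_div]
  gcongr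
  nlinarith [mul_nonneg (sub_nonneg.2 haz) (sub_nonneg.2 hma)]

lemma integral_Ioi_le_exp (hσ : 0 < σ) {m a : ℝ} (hma : m ≤ a) :
    ∫ z in Set.Ioi a, gaussPdf σ m z ≤ exp (-(a - m) ^ 2 / (2 * σ ^ 2)) :=
  calc ∫ z in Set.Ioi a, gaussPdf σ m z
      ≤ ∫ z in Set.Ioi a, exp (-(a - m) ^ 2 / (2 * σ ^ 2)) * gaussPdf σ a z :=
        setIntegral_mono_on (integrable hσ m).integrableOn
          ((integrable hσ a).const_mul _).integrableOn measurableSet_Ioi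
          fun _ hz ↦ le_exp_mul_gaussPdf hσ.le hma (le_of_lt hz)
    _ = exp (-(a - m) ^ 2 / (2 * σ ^ 2)) * ∫ z in Set.Ioi a, gaussPdf σ a z :=
        integral_const_mul _ _
    _ ≤ exp (-(a - m) ^ 2 / (2 * σ ^ 2)) :=
        mul_le_of_le_one_right (exp_pos _).le (setIntegral_le_one hσ a _)

lemma integral_Ioi_mul_rpow_likelihoodRatio_le (hσ : 0 < σ) {c α z₀ : ℝ} (hc : 0 ≤ c)
    (hαz₀ : α ≤ z₀) :
    ∫ z in Set.Ioi z₀, gaussPdf σ 0 z * (c * (gaussPdf σ 1 z / gaussPdf σ 0 z)) ^ α ≤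
      c ^ α * exp ((α ^ 2 - α - (z₀ - α) ^ 2) / (2 * σ ^ 2)) := by
  simp_rw [mul_rpow_likelihoodRatio hσ.ne' hc, integral_const_mul]
  calc c ^ α * exp ((α ^ 2 - α) / (2 * σ ^ 2)) * ∫ z in Set.Ioi z₀, gaussPdf σ α z
      ≤ c ^ α * exp ((α ^ 2 - α) / (2 * σ ^ 2)) * exp (-(z₀ - α) ^ 2 / (2 * σ ^ 2)) := by
        gcongr
        exact integral_Ioi_le_exp hσ hαz₀
    _ = c ^ α * exp ((α ^ 2 - α - (z₀ - α) ^ 2) / (2 * σ ^ 2)) := by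
        rw [mul_assoc, ← exp_add]
        ring_nf

end gaussPdf

theorem tail_integral_bound_general (σ q α : ℝ) (hσ : 0 < σ) (hq0 : 0 < q)
    (hα : 1 < α)
    (hz₀ : α ≤ (1 : ℝ) / 2 + σ ^ 2 * Real.log (1 + 1 / (q * (α - 1)))) :
    ∫ z in Set.Ioi ((1 : ℝ) / 2 + σ ^ 2 * Real.log (1 + 1 / (q * (α - 1)))),
        gaussPdf σ 0 z * (q * α * (gaussPdf σ 1 z / gaussPdf σ 0 z)) ^ α ≤
      (q * α) ^ α *
        Real.exp ((α ^ 2 - α -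
          ((1 / 2 + σ ^ 2 * Real.log (1 + 1 / (q * (α - 1)))) - α) ^ 2) / (2 * σ ^ 2)) :=
  gaussPdf.integral_Ioi_mul_rpow_likelihoodRatio_le hσ (by positivity) hz₀

theorem tail_integral_bound (σ q α : ℝ) (hσ : 0 < σ) (hq0 : 0 < q) (hq1 : q < 1)
    (hα : 1 < α)
    (hz₀ : α ≤ (1 : ℝ) / 2 + σ ^ 2 * Real.log (1 + 1 / (q * (α - 1)))) :
    ∫ z in Set.Ioi ((1 : ℝ) / 2 + σ ^ 2 * Real.log (1 + 1 / (q * (α - 1)))),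
        gaussPdf σ 0 z * (q * α * (gaussPdf σ 1 z / gaussPdf σ 0 z)) ^ α ≤
      (q * α) ^ α *
        Real.exp ((α ^ 2 - α -
          ((1 / 2 + σ ^ 2 * Real.log (1 + 1 / (q * (α - 1)))) - α) ^ 2) / (2 * σ ^ 2)) :=
  tail_integral_bound_general σ q α hσ hq0 hα hz₀
end
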